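/- arXiv:0706.3669 — 4 statements merged into one kernel-verified Lean document; each statement's English description precedes it below -/
import Mathlib

section
/- Let n ≥ 2 be an integer, λ ∈ ℝ, and l(λ) = √(max(((n−1)/2)² − λ, 0)). (i) If r ∈ ℝ satisfies r > max(0, 1−2l(λ)) and r ≠ 1+2l(λ), then there exists γ ∈ ℝ such that all three quantities r−1+γ, 1−γ, and γ·((n−r)(n+r−2)/4 − λ) are strictly positive. (ii) If r < min(0, 1−2l(λ)), then there exists γ ∈ ℝ such that all three quantities r−1+γ, 1−γ, and γ·((n−r)(n+r−2)/4 − λ) are strictly negative. -/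
/-- With `l(λ) = √(max(((n−1)/2)² − λ, 0))`:
(i) if `r > max(0, 1−2l(λ))` and `r ≠ 1+2l(λ)`, there is `γ` making
`r−1+γ`, `1−γ`, `γ·((n−r)(n+r−2)/4 − λ)` all positive;
(ii) if `r < min(0, 1−2l(λ))`, there is `γ` making all three negative. -/
theorem stmt2 (n : ℕ) (hn : 2 ≤ n) (lam : ℝ) (lΛ : ℝ)
    (hl : lΛ = Real.sqrt (max (((((n : ℝ) - 1) / 2) ^ 2) - lam) 0)) :
    (∀ r : ℝ, max 0 (1 - 2 * lΛ) < r → r ≠ 1 + 2 * lΛ →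
      ∃ γ : ℝ, 0 < r - 1 + γ ∧ 0 < 1 - γ ∧
        0 < γ * (((n : ℝ) - r) * ((n : ℝ) + r - 2) / 4 - lam)) ∧
    (∀ r : ℝ, r < min 0 (1 - 2 * lΛ) →
      ∃ γ : ℝ, r - 1 + γ < 0 ∧ 1 - γ < 0 ∧
        γ * (((n : ℝ) - r) * ((n : ℝ) + r - 2) / 4 - lam) < 0) := by
  have hl0 : 0 ≤ lΛ := hl ▸ Real.sqrt_nonneg _
  have hsq : lΛ ^ 2 = max (((((n : ℝ) - 1) / 2) ^ 2) - lam) 0 := by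
    rw [hl, Real.sq_sqrt (le_max_right _ _)]
  have hle : ((((n : ℝ) - 1) / 2) ^ 2) - lam ≤ lΛ ^ 2 := hsq ▸ le_max_left _ _
  constructor
  · intro r hr hne
    rw [max_lt_iff] at hr
    obtain ⟨hr0, hrl⟩ := hr
    rcases lt_trichotomy (((n : ℝ) - r) * ((n : ℝ) + r - 2) / 4 - lam) 0 with hQ | hQ | hQ
    · -- Q < 0 : then r > 1 + 2lΛ ≥ 1, pick γ = (1-r)/2 < 0
      have hc : ((((n : ℝ) - 1) / 2) ^ 2) - lam < ((r - 1) / 2) ^ 2 := by nlinarith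
      have hr1 : 1 < r := by
        rcases le_or_gt 0 (((((n : ℝ) - 1) / 2) ^ 2) - lam) with h | h
        · have hsq' : lΛ ^ 2 = ((((n : ℝ) - 1) / 2) ^ 2) - lam := by
            rw [hsq, max_eq_left h]
          nlinarith [sq_nonneg (r - 1 - 2 * lΛ), sq_nonneg (r - 1 + 2 * lΛ)]
        · have hz : lΛ = 0 := by
            have : lΛ ^ 2 = 0 := by rw [hsq, max_eq_right h.le]
            exact pow_eq_zero_iff (n := 2) (by norm_num) |>.mp this
          linarith [hz ▸ hrl]
      exact ⟨(1 - r) / 2, by linarith, by linarith, by nlinarith⟩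
    · -- Q = 0 : contradiction with r ≠ 1 + 2lΛ
      exfalso
      have hc : 0 ≤ ((((n : ℝ) - 1) / 2) ^ 2) - lam := by nlinarith [sq_nonneg (r - 1)]
      have hsq' : lΛ ^ 2 = ((((n : ℝ) - 1) / 2) ^ 2) - lam := by
        rw [hsq, max_eq_left hc]
      have hfac : (r - 1 - 2 * lΛ) * (r - 1 + 2 * lΛ) = 0 := by nlinarith
      have hpos : 0 < r - 1 + 2 * lΛ := by linarith
      rcases mul_eq_zero.mp hfac with h | h
      · exact hne (by linarith)
      · linarith
    · -- Q > 0 : pick γ positive, in (1-r, 1)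
      rcases le_or_gt 1 r with h1 | h1
      · exact ⟨1 / 2, by linarith, by linarith, by nlinarith⟩
      · refine ⟨1 - r / 2, by linarith, by linarith, ?_⟩
        have : 0 < 1 - r / 2 := by linarith
        positivity
  · intro r hr
    rw [lt_min_iff] at hr
    obtain ⟨hr0, hrl⟩ := hr
    have hQ : ((n : ℝ) - r) * ((n : ℝ) + r - 2) / 4 - lam < 0 := by nlinarith
    refine ⟨(2 - r) / 2, by linarith, by linarith, ?_⟩
    have : 0 < (2 - r) / 2 := by linarith
    nlinarith
end

section
/- Let n ≥ 2 be an integer, s ∈ ℂ, and y′ ∈ ℝ^{n−1}. On the interior of the light cone Ω = {(x,y) ∈ (0,∞) × ℝ^{n−1} : |y − y′| < x}, the function u(x,y) = x^{−s}·(x² − |y−y′|²)^s (complex powers of positive reals) satisfies −(x∂ₓ)²u + (n−1)x∂ₓu + x²Δ_y u + s(n+s−1)·u = 0 at every point of Ω, where Δ_y = Σⱼ ∂²/∂yⱼ². Equivalently, u = x^s(1 − |y−y′|²/x²)^s solves the model Klein–Gordon equation (□ − λ)u = 0 with λ = −s(n+s−1). -/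
/-
With `F = x² - |y - y'|²`, the functions `x^a F^b` on the cone `F > 0` form a family that the
operator maps into itself: `x∂ₓ (x^a F^b) = a x^a F^b + 2b x^(a+2) F^(b-1)` and
`∂_{y_j} (x^a F^b) = -2b (y_j - y'_j) x^a F^(b-1)`. Summing the second `y_j`-derivatives produces
`∑ (y_j - y'_j)² = x² - F`, so `x² Δ_y` also stays in the family. For `u = x^(-s) F^s` the
coefficients of `u`, `x^(2-s) F^(s-1)` and `x^(4-s) F^(s-2)` in the result all vanish.
-/

/-- `∂ₓ` on functions of `(x, y) ∈ ℝ × ℝ^m`. -/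
noncomputable def pderivX {m : ℕ} (v : ℝ × (Fin m → ℝ) → ℂ) (p : ℝ × (Fin m → ℝ)) : ℂ :=
  fderiv ℝ v p (1, 0)

/-- `∂_{yⱼ}` on functions of `(x, y) ∈ ℝ × ℝ^m`. -/
noncomputable def pderivY {m : ℕ} (j : Fin m) (v : ℝ × (Fin m → ℝ) → ℂ)
    (p : ℝ × (Fin m → ℝ)) : ℂ :=
  fderiv ℝ v p (0, Pi.single j 1)

/-- The boundary Laplacian `Δ_y = Σⱼ ∂²/∂yⱼ²`. -/
noncomputable def lapY {m : ℕ} (v : ℝ × (Fin m → ℝ) → ℂ) (p : ℝ × (Fin m → ℝ)) : ℂ :=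
  ∑ j, pderivY j (pderivY j v) p

open ContinuousLinearMap Filter Topology

lemma hasDerivAt_ofReal_cpow_of_pos {t : ℝ} (ht : 0 < t) (c : ℂ) :
    HasDerivAt (fun x : ℝ => (x : ℂ) ^ c) (c * (t : ℂ) ^ (c - 1)) t :=
  ((hasDerivAt_id (t : ℂ)).cpow_const (Complex.ofReal_mem_slitPlane.2 ht)).comp_ofReal
    |>.congr_deriv (by simp)

lemma HasFDerivAt.ofReal_cpow_const_of_pos {E : Type*} [NormedAddCommGroup E]
    [NormedSpace ℝ E] {v : E → ℝ} {v' : E →L[ℝ] ℝ} {p : E} (hv : HasFDerivAt v v' p)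
    (hp : 0 < v p) (c : ℂ) :
    HasFDerivAt (fun q => (v q : ℂ) ^ c)
      ((c * (v p : ℂ) ^ (c - 1)) • (Complex.ofRealCLM ∘L v')) p := by
  refine ((hasDerivAt_ofReal_cpow_of_pos hp c).hasFDerivAt.comp p hv).congr_fderiv ?_
  ext e
  simp [mul_comm]

namespace LightCone

variable {m : ℕ} (y' : Fin m → ℝ)

noncomputable def quadForm (q : ℝ × (Fin m → ℝ)) : ℝ := q.1 ^ 2 - ∑ j, (q.2 j - y' j) ^ 2

def cone : Set (ℝ × (Fin m → ℝ)) := {q | 0 < q.1 ∧ 0 < quadForm y' q}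

noncomputable def monomial (a b : ℂ) (q : ℝ × (Fin m → ℝ)) : ℂ :=
  (q.1 : ℂ) ^ a * (quadForm y' q : ℂ) ^ b

lemma isOpen_cone : IsOpen (cone y') :=
  (isOpen_lt continuous_const continuous_fst).inter
    (isOpen_lt continuous_const (show Continuous (quadForm y') by unfold quadForm; fun_prop))

lemma hasFDerivAt_quadForm (p : ℝ × (Fin m → ℝ)) :
    HasFDerivAt (quadForm y')
      ((2 * p.1) • fst ℝ ℝ (Fin m → ℝ) -
        ∑ j, (2 * (p.2 j - y' j)) • (proj j ∘L snd ℝ ℝ (Fin m → ℝ))) p := by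
  have hsq := fun j : Fin m =>
    (((proj j ∘L snd ℝ ℝ (Fin m → ℝ)).hasFDerivAt (x := p)).sub_const (y' j)).pow 2
  refine ((hasFDerivAt_fst.pow 2).sub (HasFDerivAt.fun_sum fun j _ => hsq j)).congr_fderiv ?_
  ext e <;> simp

lemma fderiv_quadForm_apply_one_zero (p : ℝ × (Fin m → ℝ)) :
    fderiv ℝ (quadForm y') p (1, 0) = 2 * p.1 := by
  simp [(hasFDerivAt_quadForm y' p).fderiv]

lemma fderiv_quadForm_apply_zero_single (p : ℝ × (Fin m → ℝ)) (j : Fin m) :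
    fderiv ℝ (quadForm y') p (0, Pi.single j 1) = -(2 * (p.2 j - y' j)) := by
  simp [(hasFDerivAt_quadForm y' p).fderiv, Pi.single_apply]

variable {y'} {p : ℝ × (Fin m → ℝ)}

lemma hasFDerivAt_monomial (hp : p ∈ cone y') (a b : ℂ) :
    HasFDerivAt (monomial y' a b)
      (((p.1 : ℂ) ^ a) • ((b * (quadForm y' p : ℂ) ^ (b - 1)) •
          (Complex.ofRealCLM ∘L fderiv ℝ (quadForm y') p)) +
        ((quadForm y' p : ℂ) ^ b) • ((a * (p.1 : ℂ) ^ (a - 1)) •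
          (Complex.ofRealCLM ∘L fst ℝ ℝ (Fin m → ℝ)))) p :=
  (hasFDerivAt_fst.ofReal_cpow_const_of_pos hp.1 a).mul
    ((hasFDerivAt_quadForm y' p).differentiableAt.hasFDerivAt.ofReal_cpow_const_of_pos hp.2 b)

lemma monomial_add_natCast (hp : p ∈ cone y') (a b : ℂ) (j k : ℕ) :
    monomial y' (a + j) (b + k) p
      = (p.1 : ℂ) ^ j * (quadForm y' p : ℂ) ^ k * monomial y' a b p := by
  have hx : (p.1 : ℂ) ≠ 0 := by exact_mod_cast hp.1.ne'
  have hF : (quadForm y' p : ℂ) ≠ 0 := by exact_mod_cast hp.2.ne'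
  simp only [monomial, Complex.cpow_add _ _ hx, Complex.cpow_add _ _ hF, Complex.cpow_natCast]
  ring

lemma x_mul_pderivX_monomial (hp : p ∈ cone y') (a b : ℂ) :
    (p.1 : ℂ) * pderivX (monomial y' a b) p
      = a * monomial y' a b p + 2 * b * monomial y' (a + 2) (b - 1) p := by
  have hx : (p.1 : ℂ) ≠ 0 := by exact_mod_cast hp.1.ne'
  have h2 : monomial y' (a + 2) (b - 1) p = (p.1 : ℂ) ^ 2 * monomial y' a (b - 1) p := by
    simpa using monomial_add_natCast hp a (b - 1) 2 0
  rw [h2, pderivX, (hasFDerivAt_monomial hp a b).fderiv]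
  simp only [add_apply, smul_apply, comp_apply, coe_fst', fderiv_quadForm_apply_one_zero,
    Complex.ofRealCLM_apply, smul_eq_mul, monomial, Complex.cpow_sub _ _ hx, Complex.cpow_one]
  push_cast
  field_simp
  ring

lemma pderivY_monomial (hp : p ∈ cone y') (a b : ℂ) (j : Fin m) :
    pderivY j (monomial y' a b) p
      = -2 * b * (((p.2 j - y' j : ℝ) : ℂ) * monomial y' a (b - 1) p) := by
  rw [pderivY, (hasFDerivAt_monomial hp a b).fderiv]
  simp only [add_apply, smul_apply, comp_apply, coe_fst', fderiv_quadForm_apply_zero_single,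
    Complex.ofRealCLM_apply, smul_eq_mul, monomial]
  push_cast
  ring

lemma pderivX_x_mul_pderivX_monomial (hp : p ∈ cone y') (a b : ℂ) :
    pderivX (fun q => (q.1 : ℂ) * pderivX (monomial y' a b) q) p
      = a * pderivX (monomial y' a b) p + 2 * b * pderivX (monomial y' (a + 2) (b - 1)) p := by
  have hev : (fun q => (q.1 : ℂ) * pderivX (monomial y' a b) q)
      =ᶠ[𝓝 p] fun q => a * monomial y' a b q + 2 * b * monomial y' (a + 2) (b - 1) q :=
    eventually_of_mem ((isOpen_cone y').mem_nhds hp) fun q hq => x_mul_pderivX_monomial hq a b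
  have h := ((hasFDerivAt_monomial hp a b).differentiableAt.hasFDerivAt.const_mul a).fun_add
    ((hasFDerivAt_monomial hp (a + 2) (b - 1)).differentiableAt.hasFDerivAt.const_mul (2 * b))
  rw [pderivX, hev.fderiv_eq, h.fderiv]
  simp only [add_apply, smul_apply, smul_eq_mul, pderivX]

lemma pderivY_pderivY_monomial (hp : p ∈ cone y') (a b : ℂ) (j : Fin m) :
    pderivY j (pderivY j (monomial y' a b)) p
      = -2 * b * monomial y' a (b - 1) p
        + 4 * b * (b - 1) * ((p.2 j - y' j : ℝ) : ℂ) ^ 2 * monomial y' a (b - 1 - 1) p := by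
  have hev : pderivY j (monomial y' a b)
      =ᶠ[𝓝 p] fun q => -2 * b * (((q.2 j - y' j : ℝ) : ℂ) * monomial y' a (b - 1) q) :=
    eventually_of_mem ((isOpen_cone y').mem_nhds hp) fun q hq => pderivY_monomial hq a b j
  have hy : HasFDerivAt (fun q : ℝ × (Fin m → ℝ) => ((q.2 j - y' j : ℝ) : ℂ))
      (Complex.ofRealCLM ∘L proj j ∘L snd ℝ ℝ (Fin m → ℝ)) p :=
    Complex.ofRealCLM.hasFDerivAt.comp p
      (((proj j ∘L snd ℝ ℝ (Fin m → ℝ)).hasFDerivAt).sub_const (y' j))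
  have h := (hy.fun_mul (hasFDerivAt_monomial hp a (b - 1)).differentiableAt.hasFDerivAt).const_mul
    (-2 * b)
  have hd := pderivY_monomial hp a (b - 1) j
  rw [pderivY] at hd ⊢
  rw [hev.fderiv_eq, h.fderiv]
  simp only [add_apply, smul_apply, comp_apply, coe_snd', proj_apply, Pi.single_eq_same,
    Complex.ofRealCLM_apply, smul_eq_mul, hd]
  push_cast
  ring

lemma sum_sq_eq_sq_sub_quadForm (p : ℝ × (Fin m → ℝ)) :
    ∑ j, ((p.2 j - y' j : ℝ) : ℂ) ^ 2 = (p.1 : ℂ) ^ 2 - quadForm y' p := by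
  simp only [quadForm]
  push_cast
  ring

lemma sq_mul_lapY_monomial (hp : p ∈ cone y') (a b : ℂ) :
    (p.1 : ℂ) ^ 2 * lapY (monomial y' a b) p
      = -2 * m * b * monomial y' (a + 2) (b - 1) p
        + 4 * b * (b - 1)
          * (monomial y' (a + 2 + 2) (b - 1 - 1) p - monomial y' (a + 2) (b - 1) p) := by
  have h₁ : monomial y' (a + 2) (b - 1) p = (p.1 : ℂ) ^ 2 * monomial y' a (b - 1) p := by
    simpa using monomial_add_natCast hp a (b - 1) 2 0
  have h₂ : monomial y' (a + 2) (b - 1) p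
      = (p.1 : ℂ) ^ 2 * quadForm y' p * monomial y' a (b - 1 - 1) p := by
    simpa using monomial_add_natCast hp a (b - 1 - 1) 2 1
  have h₃ : monomial y' (a + 2 + 2) (b - 1 - 1) p
      = (p.1 : ℂ) ^ 4 * monomial y' a (b - 1 - 1) p := by
    rw [add_assoc, show (2 + 2 : ℂ) = (4 : ℕ) by norm_num]
    simpa using monomial_add_natCast hp a (b - 1 - 1) 4 0
  simp only [lapY, pderivY_pderivY_monomial hp, Finset.sum_add_distrib, ← Finset.sum_mul,
    ← Finset.mul_sum, sum_sq_eq_sq_sub_quadForm, Finset.sum_const, Finset.card_univ,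
    Fintype.card_fin, nsmul_eq_mul]
  linear_combination 2 * m * b * h₁ + 4 * b * (b - 1) * h₂ - 4 * b * (b - 1) * h₃

theorem kleinGordon_monomial (hp : p ∈ cone y') (s : ℂ) :
    -((p.1 : ℂ) * pderivX (fun q => (q.1 : ℂ) * pderivX (monomial y' (-s) s) q) p)
      + (m : ℂ) * ((p.1 : ℂ) * pderivX (monomial y' (-s) s) p)
      + (p.1 : ℂ) ^ 2 * lapY (monomial y' (-s) s) p
      + s * ((m : ℂ) + s) * monomial y' (-s) s p = 0 := by
  rw [pderivX_x_mul_pderivX_monomial hp]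
  linear_combination (s + m) * x_mul_pderivX_monomial hp (-s) s
    - 2 * s * x_mul_pderivX_monomial hp (-s + 2) (s - 1) + sq_mul_lapY_monomial hp (-s) s

end LightCone

/-- on the interior of the light cone
`Ω = {(x,y) : 0 < x, |y−y′|² < x²}` the function
`u(x,y) = x^{−s} (x² − |y−y′|²)^s` satisfies
`−(x∂ₓ)² u + (n−1) x∂ₓ u + x² Δ_y u + s(n+s−1) u = 0`, i.e. it solves the model
Klein–Gordon equation `(□ − λ)u = 0` with `λ = −s(n+s−1)`. -/
theorem stmt9 (n : ℕ) (hn : 2 ≤ n) (s : ℂ) (y' : Fin (n - 1) → ℝ) :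
    ∀ p : ℝ × (Fin (n - 1) → ℝ), 0 < p.1 → (∑ j, (p.2 j - y' j) ^ 2) < p.1 ^ 2 →
      (-( (p.1 : ℂ) * pderivX (fun q => (q.1 : ℂ) *
            pderivX (fun q' : ℝ × (Fin (n - 1) → ℝ) =>
              (q'.1 : ℂ) ^ (-s) *
                (((q'.1 ^ 2 - ∑ j, (q'.2 j - y' j) ^ 2 : ℝ)) : ℂ) ^ s) q) p)
        + ((n : ℂ) - 1) * ((p.1 : ℂ) *
            pderivX (fun q' : ℝ × (Fin (n - 1) → ℝ) =>
              (q'.1 : ℂ) ^ (-s) *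
                (((q'.1 ^ 2 - ∑ j, (q'.2 j - y' j) ^ 2 : ℝ)) : ℂ) ^ s) p)
        + (p.1 : ℂ) ^ 2 *
            lapY (fun q' : ℝ × (Fin (n - 1) → ℝ) =>
              (q'.1 : ℂ) ^ (-s) *
                (((q'.1 ^ 2 - ∑ j, (q'.2 j - y' j) ^ 2 : ℝ)) : ℂ) ^ s) p
        + s * ((n : ℂ) + s - 1) *
            ((p.1 : ℂ) ^ (-s) *
              (((p.1 ^ 2 - ∑ j, (p.2 j - y' j) ^ 2 : ℝ)) : ℂ) ^ s))
      = 0 := by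
  intro p hx hlt
  have key := LightCone.kleinGordon_monomial (y' := y') ⟨hx, sub_pos.2 hlt⟩ s
  rw [Nat.cast_sub (by omega : 1 ≤ n), Nat.cast_one,
    show s * ((n : ℂ) - 1 + s) = s * (n + s - 1) by ring] at key
  exact key
end

section
/- Let n ≥ 2 be an integer and λ, σ, s ∈ ℂ. For every smooth u : B → ℂ on the open unit ball B ⊂ ℝ^{n−1}, the identity P_σ((1−|Y|²)^s u) = (1−|Y|²)^s · [ 4s(s−σ)·(1−|Y|²)^{−1}·u + P_{σ−2s} u ] holds at every point of B. -/
/-- `∂ⱼ` on functions on `ℝ^m`. -/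
noncomputable def pd {m : ℕ} (j : Fin m) (u : (Fin m → ℝ) → ℂ) (Y : Fin m → ℝ) : ℂ :=
  fderiv ℝ u Y (Pi.single j 1)

/-- The Euler vector field `E u (Y) = Σⱼ Yⱼ ∂ⱼ u (Y)`. -/
noncomputable def euler {m : ℕ} (u : (Fin m → ℝ) → ℂ) (Y : Fin m → ℝ) : ℂ :=
  ∑ j, (Y j : ℂ) * pd j u Y

/-- The Euclidean Laplacian `Δ u = Σⱼ ∂ⱼ² u`. -/
noncomputable def lap {m : ℕ} (u : (Fin m → ℝ) → ℂ) (Y : Fin m → ℝ) : ℂ :=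
  ∑ j, pd j (pd j u) Y

/-- The normal operator family `P_σ u = −(E + (n−1−σ))((E − σ)u) + Δ_Y u − λ u`
acting on functions on `ℝ^{n−1}` (the real form of
`(YD_Y − i(n−1−σ))(YD_Y + iσ) − Δ_Y − λ`). -/
noncomputable def Pop (n : ℕ) (lam σ : ℂ) (u : (Fin (n - 1) → ℝ) → ℂ)
    (Y : Fin (n - 1) → ℝ) : ℂ :=
  -(euler (fun Z => euler u Z - σ * u Z) Y
      + ((n : ℂ) - 1 - σ) * (euler u Y - σ * u Y))
    + lap u Y - lam * u Y

/-!
With `ρ = 1 - |Y|²`, the Leibniz rules for `E`, `E²` and `Δ` reduce the claim to the action of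
these operators on powers of `ρ`. Since `|Y|² = 1 - ρ`, the Euler field acts on them by
`E ρ^t = 2t (ρ^t - ρ^(t-1))`, and `Δ ρ^t = -2t ((n-1) ρ^(t-1) + E ρ^(t-1))`, so everything is a
combination of `ρ^s, ρ^(s-1), ρ^(s-2)`. The cross term `2 Σⱼ ∂ⱼρ^s ∂ⱼu = -4s ρ^(s-1) E u`
cancels the `ρ^(s-1) E u` part of `-2 (E ρ^s)(E u)`, which shifts `σ` to `σ - 2s`.
-/

open Filter Topology

section Calculus

variable {m : ℕ} {f g : (Fin m → ℝ) → ℂ} {Y : Fin m → ℝ}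

lemma euler_eq_fderiv_apply (f : (Fin m → ℝ) → ℂ) (Y : Fin m → ℝ) :
    euler f Y = fderiv ℝ f Y Y := by
  calc euler f Y = ∑ j, fderiv ℝ f Y (Y j • Pi.single j 1) := by
        simp only [euler, pd, map_smul, Complex.real_smul]
    _ = fderiv ℝ f Y Y := by
        rw [← map_sum]
        congr 1
        ext i
        simp [Pi.single_apply]

lemma Filter.EventuallyEq.pd_eq (h : f =ᶠ[𝓝 Y] g) (j : Fin m) : pd j f Y = pd j g Y := by
  rw [pd, pd, h.fderiv_eq]

lemma Filter.EventuallyEq.euler_eq (h : f =ᶠ[𝓝 Y] g) : euler f Y = euler g Y := by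
  rw [euler_eq_fderiv_apply, euler_eq_fderiv_apply, h.fderiv_eq]

lemma pd_add (hf : DifferentiableAt ℝ f Y) (hg : DifferentiableAt ℝ g Y) (j : Fin m) :
    pd j (fun Z => f Z + g Z) Y = pd j f Y + pd j g Y := by
  simp [pd, fderiv_fun_add hf hg]

lemma pd_const_mul (hf : DifferentiableAt ℝ f Y) (a : ℂ) (j : Fin m) :
    pd j (fun Z => a * f Z) Y = a * pd j f Y := by
  simp [pd, fderiv_const_mul hf]

lemma pd_mul (hf : DifferentiableAt ℝ f Y) (hg : DifferentiableAt ℝ g Y) (j : Fin m) :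
    pd j (fun Z => f Z * g Z) Y = pd j f Y * g Y + f Y * pd j g Y := by
  simp only [pd, fderiv_fun_mul hf hg, add_apply, smul_apply, smul_eq_mul]
  ring

lemma pd_coe_apply_mul (hg : DifferentiableAt ℝ g Y) (j : Fin m) :
    pd j (fun Z => (Z j : ℂ) * g Z) Y = g Y + Y j * pd j g Y := by
  have hcoord : HasFDerivAt (fun Z : Fin m → ℝ => (Z j : ℂ))
      (Complex.ofRealCLM.comp (ContinuousLinearMap.proj j)) Y :=
    (Complex.ofRealCLM.comp (ContinuousLinearMap.proj j : (Fin m → ℝ) →L[ℝ] ℝ)).hasFDerivAt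
  rw [pd_mul hcoord.differentiableAt hg, pd, hcoord.fderiv]
  simp

lemma euler_add (hf : DifferentiableAt ℝ f Y) (hg : DifferentiableAt ℝ g Y) :
    euler (fun Z => f Z + g Z) Y = euler f Y + euler g Y := by
  simp [euler_eq_fderiv_apply, fderiv_fun_add hf hg]

lemma euler_sub (hf : DifferentiableAt ℝ f Y) (hg : DifferentiableAt ℝ g Y) :
    euler (fun Z => f Z - g Z) Y = euler f Y - euler g Y := by
  simp [euler_eq_fderiv_apply, fderiv_fun_sub hf hg]

lemma euler_const_mul (hf : DifferentiableAt ℝ f Y) (a : ℂ) :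
    euler (fun Z => a * f Z) Y = a * euler f Y := by
  simp [euler_eq_fderiv_apply, fderiv_const_mul hf]

lemma euler_mul (hf : DifferentiableAt ℝ f Y) (hg : DifferentiableAt ℝ g Y) :
    euler (fun Z => f Z * g Z) Y = euler f Y * g Y + f Y * euler g Y := by
  simp only [euler_eq_fderiv_apply, fderiv_fun_mul hf hg, add_apply, smul_apply, smul_eq_mul]
  ring

lemma ContDiffAt.pd {k : WithTop ℕ∞} (hf : ContDiffAt ℝ (k + 1) f Y) (j : Fin m) :
    ContDiffAt ℝ k (pd j f) Y :=
  hf.fderiv_right_succ.clm_apply contDiffAt_const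

lemma ContDiffAt.euler {k : WithTop ℕ∞} (hf : ContDiffAt ℝ (k + 1) f Y) :
    ContDiffAt ℝ k (euler f) Y := by
  rw [funext (euler_eq_fderiv_apply f)]
  exact hf.fderiv_right_succ.clm_apply contDiffAt_id

lemma ContDiffAt.eventually_differentiableAt (hf : ContDiffAt ℝ 2 f Y) :
    ∀ᶠ Z in 𝓝 Y, DifferentiableAt ℝ f Z :=
  (hf.eventually (by simp)).mono fun _ hZ => hZ.differentiableAt (by simp)

lemma euler_euler_mul (hf : ContDiffAt ℝ 2 f Y) (hg : ContDiffAt ℝ 2 g Y) :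
    euler (euler fun Z => f Z * g Z) Y
      = euler (euler f) Y * g Y + 2 * (euler f Y * euler g Y) + f Y * euler (euler g) Y := by
  have hprod : euler (fun Z => f Z * g Z) =ᶠ[𝓝 Y] fun Z => euler f Z * g Z + f Z * euler g Z := by
    filter_upwards [hf.eventually_differentiableAt, hg.eventually_differentiableAt]
      with Z hfZ hgZ using euler_mul hfZ hgZ
  have hf₁ := hf.differentiableAt (by simp)
  have hg₁ := hg.differentiableAt (by simp)
  have hEf := (hf.euler (k := 1)).differentiableAt (by simp)
  have hEg := (hg.euler (k := 1)).differentiableAt (by simp)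
  rw [hprod.euler_eq, euler_add (hEf.fun_mul hg₁) (hf₁.fun_mul hEg), euler_mul hEf hg₁,
    euler_mul hf₁ hEg]
  ring

lemma lap_mul (hf : ContDiffAt ℝ 2 f Y) (hg : ContDiffAt ℝ 2 g Y) :
    lap (fun Z => f Z * g Z) Y
      = lap f Y * g Y + 2 * ∑ j, pd j f Y * pd j g Y + f Y * lap g Y := by
  have hf₁ := hf.differentiableAt (by simp)
  have hg₁ := hg.differentiableAt (by simp)
  have hj : ∀ j, pd j (pd j fun Z => f Z * g Z) Y
      = pd j (pd j f) Y * g Y + 2 * (pd j f Y * pd j g Y) + f Y * pd j (pd j g) Y := by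
    intro j
    have hprod : pd j (fun Z => f Z * g Z) =ᶠ[𝓝 Y] fun Z => pd j f Z * g Z + f Z * pd j g Z := by
      filter_upwards [hf.eventually_differentiableAt, hg.eventually_differentiableAt]
        with Z hfZ hgZ using pd_mul hfZ hgZ j
    have hpf := ((hf.pd (k := 1)) j).differentiableAt (by simp)
    have hpg := ((hg.pd (k := 1)) j).differentiableAt (by simp)
    rw [hprod.pd_eq, pd_add (hpf.fun_mul hg₁) (hf₁.fun_mul hpg), pd_mul hpf hg₁, pd_mul hf₁ hpg]
    ring
  simp only [lap, hj, Finset.sum_add_distrib, ← Finset.sum_mul, ← Finset.mul_sum]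

lemma Pop_eq (n : ℕ) (lam σ : ℂ) {u : (Fin (n - 1) → ℝ) → ℂ} {Y : Fin (n - 1) → ℝ}
    (hu : ContDiffAt ℝ 2 u Y) :
    Pop n lam σ u Y = -euler (euler u) Y - ((n : ℂ) - 1 - 2 * σ) * euler u Y
      + σ * ((n : ℂ) - 1 - σ) * u Y + lap u Y - lam * u Y := by
  have hu₁ := hu.differentiableAt (by simp)
  rw [Pop, euler_sub ((hu.euler (k := 1)).differentiableAt (by simp)) (hu₁.const_mul σ),
    euler_const_mul hu₁]
  ring

end Calculus

section Weight

variable {m : ℕ} {Y : Fin m → ℝ}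

def oneSubNormSq (Y : Fin m → ℝ) : ℝ := 1 - ∑ j, Y j ^ 2

lemma analyticAt_oneSubNormSq (Y : Fin m → ℝ) : AnalyticAt ℝ oneSubNormSq Y :=
  analyticAt_const.sub <| Finset.analyticAt_fun_sum _ fun i _ =>
    ((ContinuousLinearMap.proj i : (Fin m → ℝ) →L[ℝ] ℝ).analyticAt Y).pow 2

lemma eventually_pos_oneSubNormSq (hY : 0 < oneSubNormSq Y) :
    ∀ᶠ Z in 𝓝 Y, 0 < oneSubNormSq Z :=
  (analyticAt_oneSubNormSq Y).continuousAt.eventually (lt_mem_nhds hY)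

lemma fderiv_oneSubNormSq_single (Y : Fin m → ℝ) (j : Fin m) :
    fderiv ℝ oneSubNormSq Y (Pi.single j 1) = -2 * Y j := by
  have hsq : ∀ i, fderiv ℝ (fun Z : Fin m → ℝ => Z i ^ 2) Y (Pi.single j 1)
      = 2 * Y i * (Pi.single j (1 : ℝ) : Fin m → ℝ) i := fun i => by
    rw [fderiv_fun_pow 2 (by fun_prop)]
    simp [(hasFDerivAt_apply (𝕜 := ℝ) i Y).fderiv]
  unfold oneSubNormSq
  rw [fderiv_const_sub, fderiv_fun_sum fun i _ => by fun_prop]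
  simp [hsq, Pi.single_apply]

lemma analyticAt_oneSubNormSq_cpow (t : ℂ) (hY : 0 < oneSubNormSq Y) :
    AnalyticAt ℝ (fun Z => (oneSubNormSq Z : ℂ) ^ t) Y := by
  have hpow : AnalyticAt ℂ (fun z : ℂ => z ^ t) (oneSubNormSq Y : ℂ) :=
    analyticAt_id.cpow analyticAt_const (Complex.ofReal_mem_slitPlane.2 hY)
  have hρ : AnalyticAt ℝ (fun Z => (oneSubNormSq Z : ℂ)) Y :=
    (Complex.ofRealCLM.analyticAt _).comp (analyticAt_oneSubNormSq Y)
  exact AnalyticAt.comp (f := fun Z => (oneSubNormSq Z : ℂ)) (x := Y) hpow.restrictScalars hρ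

lemma pd_oneSubNormSq_cpow (t : ℂ) (hY : 0 < oneSubNormSq Y) (j : Fin m) :
    pd j (fun Z => (oneSubNormSq Z : ℂ) ^ t) Y
      = -2 * t * Y j * (oneSubNormSq Y : ℂ) ^ (t - 1) := by
  have hpow : HasDerivAt (fun x : ℝ => (x : ℂ) ^ t)
      (t * (oneSubNormSq Y : ℂ) ^ (t - 1)) (oneSubNormSq Y) := by
    simpa using ((hasDerivAt_id (oneSubNormSq Y : ℂ)).cpow_const
      (Complex.ofReal_mem_slitPlane.2 hY)).comp_ofReal
  have hcomp := hpow.hasFDerivAt.comp Y (analyticAt_oneSubNormSq Y).differentiableAt.hasFDerivAt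
  rw [pd, show (fun Z => (oneSubNormSq Z : ℂ) ^ t) = (fun x : ℝ => (x : ℂ) ^ t) ∘ oneSubNormSq
    from rfl, hcomp.fderiv]
  simp only [ContinuousLinearMap.comp_apply, fderiv_oneSubNormSq_single,
    ContinuousLinearMap.toSpanSingleton_apply, Complex.real_smul]
  push_cast
  ring

lemma sum_pd_oneSubNormSq_cpow_mul_pd (t : ℂ) (hY : 0 < oneSubNormSq Y)
    (g : (Fin m → ℝ) → ℂ) :
    ∑ j, pd j (fun Z => (oneSubNormSq Z : ℂ) ^ t) Y * pd j g Y
      = -2 * t * (oneSubNormSq Y : ℂ) ^ (t - 1) * euler g Y := by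
  simp only [pd_oneSubNormSq_cpow t hY, euler, Finset.mul_sum]
  exact Finset.sum_congr rfl fun j _ => by ring

lemma euler_oneSubNormSq_cpow (t : ℂ) (hY : 0 < oneSubNormSq Y) :
    euler (fun Z => (oneSubNormSq Z : ℂ) ^ t) Y
      = 2 * t * ((oneSubNormSq Y : ℂ) ^ t - (oneSubNormSq Y : ℂ) ^ (t - 1)) := by
  have hρ : (oneSubNormSq Y : ℂ) ≠ 0 := Complex.ofReal_ne_zero.2 hY.ne'
  have hsum : ∑ j, (Y j : ℂ) * Y j = 1 - oneSubNormSq Y := by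
    simp [oneSubNormSq, sq]
  have hpow : (oneSubNormSq Y : ℂ) ^ t = oneSubNormSq Y * (oneSubNormSq Y : ℂ) ^ (t - 1) := by
    rw [Complex.cpow_sub _ _ hρ, Complex.cpow_one, mul_div_cancel₀ _ hρ]
  have heuler : euler (fun Z => (oneSubNormSq Z : ℂ) ^ t) Y
      = -2 * t * (oneSubNormSq Y : ℂ) ^ (t - 1) * ∑ j, (Y j : ℂ) * Y j := by
    simp only [euler, pd_oneSubNormSq_cpow t hY, Finset.mul_sum]
    exact Finset.sum_congr rfl fun j _ => by ring
  linear_combination heuler + (-2 * t * (oneSubNormSq Y : ℂ) ^ (t - 1)) * hsum - 2 * t * hpow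

lemma euler_euler_oneSubNormSq_cpow (t : ℂ) (hY : 0 < oneSubNormSq Y) :
    euler (euler fun Z => (oneSubNormSq Z : ℂ) ^ t) Y
      = 2 * t * (2 * t * ((oneSubNormSq Y : ℂ) ^ t - (oneSubNormSq Y : ℂ) ^ (t - 1))
          - 2 * (t - 1) * ((oneSubNormSq Y : ℂ) ^ (t - 1) - (oneSubNormSq Y : ℂ) ^ (t - 2))) := by
  have hE : euler (fun Z => (oneSubNormSq Z : ℂ) ^ t)
      =ᶠ[𝓝 Y] fun Z => 2 * t * ((oneSubNormSq Z : ℂ) ^ t - (oneSubNormSq Z : ℂ) ^ (t - 1)) :=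
    (eventually_pos_oneSubNormSq hY).mono fun Z hZ => euler_oneSubNormSq_cpow t hZ
  have hd (r : ℂ) := (analyticAt_oneSubNormSq_cpow r hY).differentiableAt
  rw [hE.euler_eq, euler_const_mul ((hd t).fun_sub (hd (t - 1))), euler_sub (hd t) (hd (t - 1)),
    euler_oneSubNormSq_cpow t hY, euler_oneSubNormSq_cpow (t - 1) hY,
    show t - 1 - 1 = t - 2 by ring]

lemma lap_oneSubNormSq_cpow (t : ℂ) (hY : 0 < oneSubNormSq Y) :
    lap (fun Z => (oneSubNormSq Z : ℂ) ^ t) Y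
      = -2 * t * (m * (oneSubNormSq Y : ℂ) ^ (t - 1)
          + 2 * (t - 1) * ((oneSubNormSq Y : ℂ) ^ (t - 1) - (oneSubNormSq Y : ℂ) ^ (t - 2))) := by
  have hd := (analyticAt_oneSubNormSq_cpow (t - 1) hY).differentiableAt
  have hj (j : Fin m) : pd j (pd j fun Z => (oneSubNormSq Z : ℂ) ^ t) Y
      = -2 * t * ((oneSubNormSq Y : ℂ) ^ (t - 1)
          + Y j * pd j (fun Z => (oneSubNormSq Z : ℂ) ^ (t - 1)) Y) := by
    have hpd : pd j (fun Z => (oneSubNormSq Z : ℂ) ^ t)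
        =ᶠ[𝓝 Y] fun Z => -2 * t * ((Z j : ℂ) * (oneSubNormSq Z : ℂ) ^ (t - 1)) :=
      (eventually_pos_oneSubNormSq hY).mono fun Z hZ => by
        rw [pd_oneSubNormSq_cpow t hZ]; ring
    have hcoord : DifferentiableAt ℝ (fun Z : Fin m → ℝ => (Z j : ℂ)) Y := by fun_prop
    rw [hpd.pd_eq, pd_const_mul (hcoord.fun_mul hd), pd_coe_apply_mul hd]
  have hsum : ∑ j, (Y j : ℂ) * pd j (fun Z => (oneSubNormSq Z : ℂ) ^ (t - 1)) Y
      = euler (fun Z => (oneSubNormSq Z : ℂ) ^ (t - 1)) Y := rfl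
  simp only [lap, hj, ← Finset.mul_sum, Finset.sum_add_distrib, hsum,
    euler_oneSubNormSq_cpow (t - 1) hY, Finset.sum_const, Finset.card_univ, Fintype.card_fin,
    nsmul_eq_mul, show t - 1 - 1 = t - 2 by ring]

end Weight

lemma Pop_oneSubNormSq_cpow_mul {n : ℕ} (hn : 1 ≤ n) (lam σ s : ℂ) {u : (Fin (n - 1) → ℝ) → ℂ}
    {Y : Fin (n - 1) → ℝ} (hu : ContDiffAt ℝ 2 u Y) (hY : 0 < oneSubNormSq Y) :
    Pop n lam σ (fun Z => (oneSubNormSq Z : ℂ) ^ s * u Z) Y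
      = (oneSubNormSq Y : ℂ) ^ s * (4 * s * (s - σ) * (oneSubNormSq Y : ℂ)⁻¹ * u Y
          + Pop n lam (σ - 2 * s) u Y) := by
  have hF : ContDiffAt ℝ 2 (fun Z => (oneSubNormSq Z : ℂ) ^ s) Y :=
    (analyticAt_oneSubNormSq_cpow s hY).contDiffAt
  have hdim : ((n - 1 : ℕ) : ℂ) = n - 1 := by rw [Nat.cast_sub hn, Nat.cast_one]
  rw [Pop_eq n lam σ (hF.mul hu), Pop_eq n lam (σ - 2 * s) hu, euler_euler_mul hF hu,
    euler_mul (hF.differentiableAt (by simp)) (hu.differentiableAt (by simp)), lap_mul hF hu,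
    sum_pd_oneSubNormSq_cpow_mul_pd s hY, euler_euler_oneSubNormSq_cpow s hY,
    euler_oneSubNormSq_cpow s hY, lap_oneSubNormSq_cpow s hY, hdim]
  have hρ : (oneSubNormSq Y : ℂ) ≠ 0 := Complex.ofReal_ne_zero.2 hY.ne'
  rw [Complex.cpow_sub _ _ hρ, Complex.cpow_sub _ _ hρ, Complex.cpow_one, Complex.cpow_two]
  field_simp
  ring

/-- the conjugation identity
`P_σ((1−|Y|²)^s u) = (1−|Y|²)^s [4s(s−σ)(1−|Y|²)^{−1} u + P_{σ−2s} u]`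
on the open unit ball `B ⊂ ℝ^{n−1}`, for every `u` smooth on `B`. -/
theorem stmt11 (n : ℕ) (hn : 2 ≤ n) (lam σ s : ℂ)
    (u : (Fin (n - 1) → ℝ) → ℂ)
    (hu : ContDiffOn ℝ (⊤ : ℕ∞) u {Y : Fin (n - 1) → ℝ | ∑ j, (Y j) ^ 2 < 1}) :
    ∀ Y ∈ {Y : Fin (n - 1) → ℝ | ∑ j, (Y j) ^ 2 < 1},
      Pop n lam σ
          (fun Z => (((1 - ∑ j, (Z j) ^ 2 : ℝ)) : ℂ) ^ s * u Z) Y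
        = (((1 - ∑ j, (Y j) ^ 2 : ℝ)) : ℂ) ^ s *
            (4 * s * (s - σ) * (((1 - ∑ j, (Y j) ^ 2 : ℝ)) : ℂ)⁻¹ * u Y
              + Pop n lam (σ - 2 * s) u Y) := by
  intro Y hY
  have hball : IsOpen {Y : Fin (n - 1) → ℝ | ∑ j, (Y j) ^ 2 < 1} :=
    isOpen_lt (by fun_prop) continuous_const
  exact Pop_oneSubNormSq_cpow_mul (by omega) lam σ s
    ((hu.contDiffAt (hball.mem_nhds hY)).of_le (WithTop.coe_le_coe.2 le_top)) (sub_pos.2 hY)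
end

section
/- Let n ≥ 2 be an integer, λ, σ ∈ ℂ, and R > 0. Suppose v : ℝ^{n−1} → ℂ is smooth on the open ball B(0,R) and satisfies E(Ev) + (n−1+2σ)·Ev + (λ + σ(n−1+σ))·v = 0 on B(0,R), where Ev(Y) = Σⱼ Yⱼ ∂ⱼv(Y). If neither ŝ₊(λ) − σ nor ŝ₋(λ) − σ is a nonnegative integer, then v vanishes identically on B(0,R). -/
open Set Filter Topology
open scoped ContDiff

section OneVariable

variable {u f : ℝ → ℂ} {a s : ℂ} {t₀ : ℝ} {U : Set ℝ}

lemma hasDerivAt_mul_cexp_neg_mul_log {u' : ℂ} {τ : ℝ} (hτ : 0 < τ) (hu : HasDerivAt u u' τ)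
    (hode : τ * u' = a * u τ) :
    HasDerivAt (fun x : ℝ => u x * Complex.exp (-a * Real.log x)) 0 τ := by
  have hlog : HasDerivAt (fun x : ℝ => ((Real.log x : ℝ) : ℂ)) ((τ⁻¹ : ℝ) : ℂ) τ :=
    (Real.hasDerivAt_log hτ.ne').ofReal_comp
  refine (hu.fun_mul (hlog.const_mul (-a)).cexp).congr_deriv ?_
  have hτ' : (τ : ℂ) ≠ 0 := by exact_mod_cast hτ.ne'
  rw [Complex.ofReal_inv]
  field_simp
  linear_combination (Complex.exp (-(a * Real.log τ))) * hode

lemma norm_cexp_neg_mul_log_le (ha : a.re ≤ 0) {ε τ : ℝ} (hε : 0 < ε) (hετ : ε ≤ τ) :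
    ‖Complex.exp (-a * Real.log ε)‖ ≤ ‖Complex.exp (-a * Real.log τ)‖ := by
  simp only [Complex.norm_exp, neg_mul, Complex.neg_re, Complex.mul_re, Complex.ofReal_re,
    Complex.ofReal_im, mul_zero, sub_zero, Real.exp_le_exp, neg_le_neg_iff]
  exact mul_le_mul_of_nonpos_left (Real.log_le_log hε hετ) ha

lemma eq_zero_of_mul_deriv_eq_of_re_nonpos (ha : a.re ≤ 0) (ht₀ : 0 < t₀)
    (hu : ∀ t ∈ Ioc 0 t₀, DifferentiableAt ℝ u t)
    (hode : ∀ t ∈ Ioc 0 t₀, t * deriv u t = a * u t)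
    (h0 : Tendsto u (𝓝[>] 0) (𝓝 0)) : u t₀ = 0 := by
  set φ := fun x : ℝ => u x * Complex.exp (-a * Real.log x)
  have hφ : ∀ t ∈ Ioc 0 t₀, HasDerivAt φ 0 t := fun t ht =>
    hasDerivAt_mul_cexp_neg_mul_log ht.1 (hu t ht).hasDerivAt (hode t ht)
  have hconst : ∀ ε ∈ Ioc 0 t₀, φ t₀ = φ ε := by
    intro ε hε
    have hsub : Icc ε t₀ ⊆ Ioc 0 t₀ := fun x hx => ⟨hε.1.trans_le hx.1, hx.2⟩
    exact constant_of_has_deriv_right_zero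
      (fun x hx => (hφ x (hsub hx)).continuousAt.continuousWithinAt)
      (fun x hx => (hφ x (hsub (Ico_subset_Icc_self hx))).hasDerivWithinAt) t₀
      (right_mem_Icc.2 hε.2)
  have hbound :
      ∀ᶠ ε in 𝓝[>] 0, ‖φ t₀‖ ≤ ‖u ε‖ * ‖Complex.exp (-a * Real.log t₀)‖ := by
    filter_upwards [Ioc_mem_nhdsGT ht₀] with ε hε
    rw [hconst ε hε, norm_mul]
    gcongr
    exact norm_cexp_neg_mul_log_le ha hε.1 hε.2
  have hφ0 : ‖φ t₀‖ ≤ 0 := by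
    refine ge_of_tendsto ?_ hbound
    simpa using h0.norm.mul_const ‖Complex.exp (-a * Real.log t₀)‖
  have : ‖φ t₀‖ = 0 := le_antisymm hφ0 (norm_nonneg _)
  simpa [φ, Complex.exp_ne_zero] using this

lemma mul_deriv_deriv_eq (hU : IsOpen U) (hf : ContDiffOn ℝ ∞ f U)
    (hode : ∀ t ∈ U, t * deriv f t = s * f t) :
    ∀ t ∈ U, t * deriv (deriv f) t = (s - 1) * deriv f t := by
  intro t ht
  have hft : DifferentiableAt ℝ f t :=
    (hf.contDiffAt (hU.mem_nhds ht)).differentiableAt (by simp)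
  have hf' : ContDiffOn ℝ ∞ (deriv f) U := hf.deriv_of_isOpen hU (by exact_mod_cast le_top)
  have hf't : DifferentiableAt ℝ (deriv f) t :=
    (hf'.contDiffAt (hU.mem_nhds ht)).differentiableAt (by simp)
  have hlhs : HasDerivAt (fun x : ℝ => (x : ℂ) * deriv f x)
      (1 * deriv f t + t * deriv (deriv f) t) t :=
    (hasDerivAt_id t).ofReal_comp.fun_mul hf't.hasDerivAt
  have hrhs : HasDerivAt (fun x : ℝ => (x : ℂ) * deriv f x) (s * deriv f t) t :=
    (hft.hasDerivAt.const_mul s).congr_of_eventuallyEq (eventually_of_mem (hU.mem_nhds ht) hode)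
  linear_combination hlhs.unique hrhs

theorem eq_zero_of_mul_deriv_eq_of_forall_ne_natCast (hU : IsOpen U) (ht₀ : 0 < t₀)
    (hsub : Icc 0 t₀ ⊆ U) (hs : ∀ k : ℕ, s ≠ k) (hf : ContDiffOn ℝ ∞ f U)
    (hode : ∀ t ∈ U, t * deriv f t = s * f t) : f t₀ = 0 := by
  have hs0 : s ≠ 0 := by exact_mod_cast hs 0
  obtain ⟨k, hk⟩ := exists_nat_ge s.re
  induction k generalizing f s with
  | zero =>
    have h0U : (0 : ℝ) ∈ U := hsub (left_mem_Icc.2 ht₀.le)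
    have hf0 : f 0 = 0 := by simpa [hs0] using (hode 0 h0U).symm
    have hcont : Tendsto f (𝓝[>] 0) (𝓝 0) :=
      hf0 ▸ (hf.continuousOn.continuousAt (hU.mem_nhds h0U)).continuousWithinAt.tendsto
    have hIoc : Ioc 0 t₀ ⊆ U := Ioc_subset_Icc_self.trans hsub
    exact eq_zero_of_mul_deriv_eq_of_re_nonpos (by simpa using hk) ht₀
      (fun t ht => (hf.differentiableOn (by simp)).differentiableAt (hU.mem_nhds (hIoc ht)))
      (fun t ht => hode t (hIoc ht)) hcont
  | succ k ih =>
    have hk' : (s - 1).re ≤ k := by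
      push_cast at hk
      simp only [Complex.sub_re, Complex.one_re]
      linarith
    have hderiv : deriv f t₀ = 0 :=
      ih (fun j h => hs (j + 1) (by push_cast; linear_combination h))
        (hf.deriv_of_isOpen hU (by exact_mod_cast le_top)) (mul_deriv_deriv_eq hU hf hode)
        (sub_ne_zero.2 (by exact_mod_cast hs 1)) hk'
    have h := hode t₀ (hsub (right_mem_Icc.2 ht₀.le))
    rw [hderiv, mul_zero] at h
    exact (mul_eq_zero.1 h.symm).resolve_left hs0

end OneVariable

section Homogeneous

variable {E : Type*} [NormedAddCommGroup E] [NormedSpace ℝ E] {S : Set E} {u : E → ℂ}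
  {s : ℂ}

lemma mul_deriv_comp_smul_eq_fderiv {Y : E} {t : ℝ} (hu : DifferentiableAt ℝ u (t • Y)) :
    t * deriv (fun τ : ℝ => u (τ • Y)) t = fderiv ℝ u (t • Y) (t • Y) := by
  have h : HasDerivAt (fun τ : ℝ => u (τ • Y)) (fderiv ℝ u (t • Y) Y) t := by
    have h := hu.hasFDerivAt.comp_hasDerivAt t ((hasDerivAt_id t).smul_const Y)
    rwa [one_smul] at h
  rw [h.deriv, map_smul, Complex.real_smul]

theorem eq_zero_of_fderiv_apply_self_eq_mul (hS : IsOpen S) (hS₀ : StarConvex ℝ 0 S)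
    (hs : ∀ k : ℕ, s ≠ k) (hu : ContDiffOn ℝ ∞ u S)
    (hode : ∀ Y ∈ S, fderiv ℝ u Y Y = s * u Y) : ∀ Y ∈ S, u Y = 0 := by
  intro Y hY
  have hU : IsOpen ((· • Y) ⁻¹' S : Set ℝ) :=
    hS.preimage (continuous_id.smul continuous_const)
  have hsub : Icc 0 1 ⊆ ((· • Y) ⁻¹' S : Set ℝ) := fun t ht => hS₀.smul_mem hY ht.1 ht.2
  have hray : ContDiffOn ℝ ∞ (fun τ : ℝ => u (τ • Y)) ((· • Y) ⁻¹' S) :=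
    hu.comp (contDiff_id.smul contDiff_const).contDiffOn (mapsTo_preimage _ _)
  refine one_smul ℝ Y ▸ eq_zero_of_mul_deriv_eq_of_forall_ne_natCast hU one_pos hsub hs hray
    fun t ht => ?_
  rw [mul_deriv_comp_smul_eq_fderiv
    ((hu.differentiableOn (by simp)).differentiableAt (hS.mem_nhds ht))]
  exact hode _ ht

end Homogeneous

section Euler

variable {m : ℕ} {S : Set (Fin m → ℝ)} {u v : (Fin m → ℝ) → ℂ} {s : ℂ}

lemma euler_eq_fderiv (u : (Fin m → ℝ) → ℂ) (Y : Fin m → ℝ) :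
    euler u Y = fderiv ℝ u Y Y := by
  calc euler u Y = ∑ j, fderiv ℝ u Y (Pi.single j (Y j)) := by
        refine Finset.sum_congr rfl fun j _ => ?_
        have hsingle : Pi.single j (Y j) = Y j • Pi.single j (1 : ℝ) := by
          rw [← Pi.single_smul, smul_eq_mul, mul_one]
        rw [hsingle, map_smul, Complex.real_smul, pd]
    _ = fderiv ℝ u Y Y := by rw [← map_sum, Finset.univ_sum_single]

lemma ContDiffOn.euler (hS : IsOpen S) (hu : ContDiffOn ℝ ∞ u S) :
    ContDiffOn ℝ ∞ (euler u) S := by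
  rw [show _root_.euler u = fun Y => fderiv ℝ u Y Y from funext (euler_eq_fderiv u)]
  exact (hu.fderiv_of_isOpen hS (by exact_mod_cast le_top)).clm_apply contDiffOn_id

lemma euler_sub_const_mul {Y : Fin m → ℝ} (hu : DifferentiableAt ℝ u Y)
    (hv : DifferentiableAt ℝ v Y) (c : ℂ) :
    euler (fun Z => u Z - c * v Z) Y = euler u Y - c * euler v Y := by
  simp only [euler_eq_fderiv]
  rw [fderiv_fun_sub hu (hv.const_mul c), fderiv_const_mul hv c]
  simp

theorem eq_zero_of_euler_eq_mul (hS : IsOpen S) (hS₀ : StarConvex ℝ 0 S)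
    (hs : ∀ k : ℕ, s ≠ k) (hu : ContDiffOn ℝ ∞ u S)
    (hode : ∀ Y ∈ S, euler u Y = s * u Y) : ∀ Y ∈ S, u Y = 0 :=
  eq_zero_of_fderiv_apply_self_eq_mul hS hS₀ hs hu fun Y hY => euler_eq_fderiv u Y ▸ hode Y hY

end Euler

lemma starConvex_setOf_sum_sq_lt (m : ℕ) (R : ℝ) :
    StarConvex ℝ 0 {Y : Fin m → ℝ | ∑ j, (Y j) ^ 2 < R ^ 2} := by
  refine starConvex_zero_iff.2 fun Y hY t ht₀ ht₁ => ?_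
  show ∑ j, ((t • Y) j) ^ 2 < R ^ 2
  calc ∑ j, ((t • Y) j) ^ 2 = t ^ 2 * ∑ j, (Y j) ^ 2 := by
        simp [mul_pow, Finset.mul_sum]
    _ ≤ ∑ j, (Y j) ^ 2 :=
        mul_le_of_le_one_left (Finset.sum_nonneg fun j _ => sq_nonneg _) (pow_le_one₀ ht₀ ht₁)
    _ < R ^ 2 := hY

theorem stmt18_general (n : ℕ) (lam σ w : ℂ)
    (hw : w ^ 2 = (((n : ℂ) - 1) / 2) ^ 2 - lam)
    (hplus : ∀ k : ℕ, (-((n : ℂ) - 1) / 2 + w) - σ ≠ (k : ℂ))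
    (hminus : ∀ k : ℕ, (-((n : ℂ) - 1) / 2 - w) - σ ≠ (k : ℂ))
    (R : ℝ)
    (v : (Fin (n - 1) → ℝ) → ℂ)
    (hv : ContDiffOn ℝ (⊤ : ℕ∞) v {Y : Fin (n - 1) → ℝ | ∑ j, (Y j) ^ 2 < R ^ 2})
    (heq : ∀ Y ∈ {Y : Fin (n - 1) → ℝ | ∑ j, (Y j) ^ 2 < R ^ 2},
      euler (fun Z => euler v Z) Y + ((n : ℂ) - 1 + 2 * σ) * euler v Y
        + (lam + σ * ((n : ℂ) - 1 + σ)) * v Y = 0) :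
    ∀ Y ∈ {Y : Fin (n - 1) → ℝ | ∑ j, (Y j) ^ 2 < R ^ 2}, v Y = 0 := by
  set S := {Y : Fin (n - 1) → ℝ | ∑ j, (Y j) ^ 2 < R ^ 2}
  have hS : IsOpen S := isOpen_lt (by fun_prop) continuous_const
  have hS₀ : StarConvex ℝ 0 S := starConvex_setOf_sum_sq_lt (n - 1) R
  set sp := (-((n : ℂ) - 1) / 2 + w) - σ
  set sm := (-((n : ℂ) - 1) / 2 - w) - σ
  have hsum : sp + sm = -((n : ℂ) - 1 + 2 * σ) := by ring
  have hprod : sp * sm = lam + σ * ((n : ℂ) - 1 + σ) := by linear_combination -hw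
  have hEv : ContDiffOn ℝ ∞ (euler v) S := hv.euler hS
  -- the equation reads `(E - sp) (E - sm) v = 0`
  have hfactor : ∀ Y ∈ S, euler v Y - sm * v Y = 0 := by
    refine eq_zero_of_euler_eq_mul hS hS₀ hplus (hEv.sub (contDiffOn_const.mul hv)) fun Y hY => ?_
    rw [euler_sub_const_mul ((hEv.differentiableOn (by simp)).differentiableAt (hS.mem_nhds hY))
      ((hv.differentiableOn (by simp)).differentiableAt (hS.mem_nhds hY))]
    linear_combination heq Y hY + euler v Y * hsum + v Y * hprod
  exact eq_zero_of_euler_eq_mul hS hS₀ hminus hv fun Y hY => by linear_combination hfactor Y hY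

/-- if `v` is smooth on the ball `B(0,R) ⊂ ℝ^{n−1}` and satisfies the
second-order Euler equation `E(Ev) + (n−1+2σ)Ev + (λ + σ(n−1+σ))v = 0` there, and if
neither `ŝ₊(λ) − σ` nor `ŝ₋(λ) − σ` is a nonnegative integer (where
`ŝ_±(λ) = −(n−1)/2 ± w`, `w² = ((n−1)/2)² − λ`), then `v ≡ 0` on `B(0,R)`. -/
theorem stmt18 (n : ℕ) (hn : 2 ≤ n) (lam σ w : ℂ)
    (hw : w ^ 2 = (((n : ℂ) - 1) / 2) ^ 2 - lam)
    (hplus : ∀ k : ℕ, (-((n : ℂ) - 1) / 2 + w) - σ ≠ (k : ℂ))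
    (hminus : ∀ k : ℕ, (-((n : ℂ) - 1) / 2 - w) - σ ≠ (k : ℂ))
    (R : ℝ) (hR : 0 < R)
    (v : (Fin (n - 1) → ℝ) → ℂ)
    (hv : ContDiffOn ℝ (⊤ : ℕ∞) v {Y : Fin (n - 1) → ℝ | ∑ j, (Y j) ^ 2 < R ^ 2})
    (heq : ∀ Y ∈ {Y : Fin (n - 1) → ℝ | ∑ j, (Y j) ^ 2 < R ^ 2},
      euler (fun Z => euler v Z) Y + ((n : ℂ) - 1 + 2 * σ) * euler v Y
        + (lam + σ * ((n : ℂ) - 1 + σ)) * v Y = 0) :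
    ∀ Y ∈ {Y : Fin (n - 1) → ℝ | ∑ j, (Y j) ^ 2 < R ^ 2}, v Y = 0 :=
  stmt18_general n lam σ w hw hplus hminus R v hv heq
end
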